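/- arXiv:1810.05410 — 2 statements merged into one kernel-verified Lean document; each statement's English description precedes it below -/
import Mathlib

section
/- Let (s,h) be a memory state, h' ⊑ h a subheap, and q ≥ 1. Then Labels_q(s,h') ⊆ Labels_q(s,h): every labelled location of (s,h') (a value s(x_i) for i ∈ [1,q], or a defined meet-point [[m_q(x_i,x_j)]]_{s,h'}) is also a labelled location of (s,h). -/
/-!
Iterates of a subheap are iterates of the heap, so the values `s x_i` and the three conditions of a
meet-point of `(s,h')` survive in `(s,h)` except the minimality condition: in `h` the path from
`x_j` may be longer and meet the path from `x_i` at some `m` strictly before `ℓ`. The path from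
`x_j` leaves `h'` only after `ℓ`, so then `ℓ` lies on an `h`-cycle through `m`. If some point `p`
before `ℓ` on the path from `x_j` were also on the path from `x_i`, then `p` is on that cycle too,
and of the two `h'`-segments `m ⇝ ℓ` and `p ⇝ ℓ` the shorter one is a final piece of the longer
one; either way `h'` already had a common point before `ℓ`. Hence `ℓ` is the meet-point
`m_q(x_j, x_i)` of `(s,h)`.
-/

namespace SLLabels

abbrev Var := ℕ
abbrev Loc := ℕ

/-- A heap: a partial function on locations with finite domain. -/
structure Heap where
  f : Loc → Option Loc
  fin : {l | f l ≠ none}.Finite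

/-- `h.iter n` is the `n`-fold functional composition of the partial function `h`. -/
def Heap.iter (h : Heap) : ℕ → Loc → Option Loc
  | 0, l => some l
  | n + 1, l => (h.iter n l).bind h.f

/-- `h' ⊑ h`: the domain of `h'` is included in the one of `h` and they agree on it. -/
def Heap.sub (h' h : Heap) : Prop := ∀ l v, h'.f l = some v → h.f l = some v

/-- `ℓ` satisfies the three defining conditions of the meet-point `m_q(x_i, x_j)`
in the memory state `(s, h)`. -/
def IsMeetPoint (q : ℕ) (s : Var → Loc) (h : Heap) (i j : Var) (ℓ : Loc) : Prop :=
  (∃ L₁ L₂ : ℕ,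
      h.iter L₁ (s i) = some ℓ ∧ h.iter L₂ (s j) = some ℓ ∧
      ∀ L₁' < L₁, ∀ (L₂' : ℕ) (m : Loc),
        h.iter L₁' (s i) = some m → h.iter L₂' (s j) ≠ some m) ∧
  ∃ k ∈ Finset.Icc 1 q, ∃ L : ℕ, h.iter L ℓ = some (s k)

/-- The set of labelled locations of `(s,h)`: the values `s x_i` for `i ∈ [1,q]`
together with the defined meet-points `m_q(x_i,x_j)` for `i,j ∈ [1,q]`. -/
def Labels (q : ℕ) (s : Var → Loc) (h : Heap) : Set Loc :=
  {ℓ | (∃ i ∈ Finset.Icc 1 q, s i = ℓ) ∨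
       ∃ i ∈ Finset.Icc 1 q, ∃ j ∈ Finset.Icc 1 q, IsMeetPoint q s h i j ℓ}

namespace Heap

variable {h h' : Heap}

theorem iter_add (h : Heap) (a b : ℕ) (x : Loc) :
    h.iter (a + b) x = (h.iter a x).bind (h.iter b) := by
  induction b with
  | zero => cases h.iter a x <;> rfl
  | succ b ih =>
    change (h.iter (a + b) x).bind h.f = _
    rw [ih]
    cases h.iter a x <;> rfl

theorem iter_add_of_eq_some {a : ℕ} {x y : Loc} (hy : h.iter a x = some y) (b : ℕ) :
    h.iter (a + b) x = h.iter b y := by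
  rw [iter_add, hy, Option.bind_some]

theorem iter_sub_of_eq_some {a b : ℕ} {x y : Loc} (hy : h.iter a x = some y) (hab : a ≤ b) :
    h.iter (b - a) y = h.iter b x := by
  rw [← Heap.iter_add_of_eq_some hy, Nat.add_sub_cancel' hab]

theorem isSome_iter_of_le {m n : ℕ} {x v : Loc} (hv : h.iter n x = some v) (hmn : m ≤ n) :
    (h.iter m x).isSome := by
  rw [← Nat.add_sub_cancel' hmn, iter_add] at hv
  cases hm : h.iter m x
  · simp [hm] at hv
  · rfl

theorem sub.iter_eq_some (hsub : h'.sub h) {n : ℕ} {x v : Loc} (hv : h'.iter n x = some v) :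
    h.iter n x = some v := by
  induction n generalizing v with
  | zero => exact hv
  | succ n ih =>
    obtain ⟨w, hw, hwv⟩ := Option.bind_eq_some_iff.1 hv
    exact Option.bind_eq_some_iff.2 ⟨w, ih hw, hsub w v hwv⟩

theorem sub.iter_eq_of_le (hsub : h'.sub h) {m n : ℕ} {x v : Loc} (hv : h'.iter n x = some v)
    (hmn : m ≤ n) : h.iter m x = h'.iter m x := by
  obtain ⟨w, hw⟩ := Option.isSome_iff_exists.1 (isSome_iter_of_le hv hmn)
  rw [hw, hsub.iter_eq_some hw]

-- `u` and `v` lie on a cycle through `ℓ`, `a ≤ b` steps before it.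
theorem iter_sub_eq_of_cycle {a b c d : ℕ} {ℓ u v : Loc}
    (hℓu : h.iter c ℓ = some u) (huℓ : h.iter a u = some ℓ)
    (hℓv : h.iter d ℓ = some v) (hvℓ : h.iter b v = some ℓ) (hab : a ≤ b) :
    h.iter (b - a) v = some u := by
  have hcyc : h.iter (c + a) ℓ = some ℓ := by rw [iter_add_of_eq_some hℓu, huℓ]
  have hcyc' : h.iter (d + b) ℓ = some ℓ := by rw [iter_add_of_eq_some hℓv, hvℓ]
  calc h.iter (b - a) v = h.iter (d + (b - a)) ℓ := (iter_add_of_eq_some hℓv _).symm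
    _ = h.iter ((c + a) + (d + (b - a))) ℓ := (iter_add_of_eq_some hcyc _).symm
    _ = h.iter ((d + b) + c) ℓ := by congr 1; omega
    _ = some u := by rw [iter_add_of_eq_some hcyc', hℓu]

end Heap

def MeetsFirst (h : Heap) (x y : Loc) (L₁ L₂ : ℕ) (ℓ : Loc) : Prop :=
  h.iter L₁ x = some ℓ ∧ h.iter L₂ y = some ℓ ∧
    ∀ L₁' < L₁, ∀ (L₂' : ℕ) (m : Loc), h.iter L₁' x = some m → h.iter L₂' y ≠ some m

theorem MeetsFirst.of_sub {h h' : Heap} (hsub : h'.sub h) {x y : Loc} {L₁ L₂ : ℕ} {ℓ : Loc}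
    (hmeet : MeetsFirst h' x y L₁ L₂ ℓ) : MeetsFirst h x y L₁ L₂ ℓ ∨ MeetsFirst h y x L₂ L₁ ℓ := by
  obtain ⟨hx', hy', hmin'⟩ := hmeet
  have hx := hsub.iter_eq_some hx'
  have hy := hsub.iter_eq_some hy'
  have hmin : ∀ a < L₁, ∀ b ≤ L₂, ∀ z, h.iter a x = some z → h.iter b y ≠ some z := by
    intro a ha b hb z hxz hyz
    rw [hsub.iter_eq_of_le hx' ha.le] at hxz
    rw [hsub.iter_eq_of_le hy' hb] at hyz
    exact hmin' a ha b z hxz hyz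
  by_cases hfirst : ∀ L₁' < L₁, ∀ (L₂' : ℕ) (m : Loc), h.iter L₁' x = some m → h.iter L₂' y ≠ some m
  · exact .inl ⟨hx, hy, hfirst⟩
  push Not at hfirst
  obtain ⟨Lm, hLm, Lm', m, hxm, hym⟩ := hfirst
  have hLm' : L₂ < Lm' := by
    by_contra! hle
    exact hmin Lm hLm Lm' hle m hxm hym
  refine .inr ⟨hy, hx, fun Lp hLp Lp' p hyp hxp => ?_⟩
  have hLp' : L₁ ≤ Lp' := by
    by_contra! hlt
    exact hmin Lp' hlt Lp hLp.le p hxp hyp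
  have hℓm : h.iter (Lm' - L₂) ℓ = some m := by rw [Heap.iter_sub_of_eq_some hy hLm'.le, hym]
  have hmℓ : h.iter (L₁ - Lm) m = some ℓ := by rw [Heap.iter_sub_of_eq_some hxm hLm.le, hx]
  have hℓp : h.iter (Lp' - L₁) ℓ = some p := by rw [Heap.iter_sub_of_eq_some hx hLp', hxp]
  have hpℓ : h.iter (L₂ - Lp) p = some ℓ := by rw [Heap.iter_sub_of_eq_some hyp hLp.le, hy]
  rcases le_total (L₁ - Lm) (L₂ - Lp) with hle | hle
  · -- `m` lies on the segment `p ⇝ ℓ` of the path from `y`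
    have hpm := Heap.iter_sub_eq_of_cycle hℓm hmℓ hℓp hpℓ hle
    rw [← Heap.iter_add_of_eq_some hyp] at hpm
    exact hmin Lm hLm _ (by omega) m hxm hpm
  · -- `p` lies on the segment `m ⇝ ℓ` of the path from `x`
    have hmp := Heap.iter_sub_eq_of_cycle hℓp hpℓ hℓm hmℓ hle
    rw [← Heap.iter_add_of_eq_some hxm] at hmp
    exact hmin _ (by omega) Lp hLp.le p hmp hyp

theorem IsMeetPoint.of_sub {q : ℕ} {s : Var → Loc} {h h' : Heap} (hsub : h'.sub h) {i j : Var}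
    {ℓ : Loc} (hℓ : IsMeetPoint q s h' i j ℓ) :
    IsMeetPoint q s h i j ℓ ∨ IsMeetPoint q s h j i ℓ := by
  obtain ⟨⟨L₁, L₂, hmeet⟩, k, hk, L, hℓk⟩ := hℓ
  have hreach : ∃ k ∈ Finset.Icc 1 q, ∃ L : ℕ, h.iter L ℓ = some (s k) :=
    ⟨k, hk, L, hsub.iter_eq_some hℓk⟩
  rcases MeetsFirst.of_sub hsub hmeet with hij | hji
  · exact .inl ⟨⟨L₁, L₂, hij⟩, hreach⟩
  · exact .inr ⟨⟨L₂, L₁, hji⟩, hreach⟩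

theorem labels_mono_general (q : ℕ) (s : Var → Loc) (h h' : Heap)
    (hsub : h'.sub h) : Labels q s h' ⊆ Labels q s h := by
  rintro ℓ (hvar | ⟨i, hi, j, hj, hℓ⟩)
  · exact .inl hvar
  · rcases hℓ.of_sub hsub with hij | hji
    · exact .inr ⟨i, hi, j, hj, hij⟩
    · exact .inr ⟨j, hj, i, hi, hji⟩

/-- Lemma: labelled locations of a subheap are labelled locations of the full heap. -/
theorem labels_mono (q : ℕ) (hq : 1 ≤ q) (s : Var → Loc) (h h' : Heap)
    (hsub : h'.sub h) : Labels q s h' ⊆ Labels q s h :=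
  labels_mono_general q s h h' hsub

end SLLabels
end

section
/- Let alloc⁻¹_y(x) denote the SL(∗,−∗,ls) formula x ↪ x ∨ y ↪ x ∨ [(alloc(y) ∧ ¬(y ↪ x) ∧ size = 1) −⊛ reach(y,x) = 2]₁. Then for all memory states (s,h) with s(x) ≠ s(y): (s,h) ⊨ alloc⁻¹_y(x) if and only if s(x) ∈ ran(h). -/
/-!
If `h l = s x`, then either `l` is `s x` or `s y` (the first two disjuncts), or the cell
`l ↦ s x` is a one-cell subheap which, extended by the fresh cell `s y ↦ l`, becomes a
two-step list segment from `s y` to `s x`. Conversely, as `s y ≠ s x`, a list segment from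
`s y` to `s x` is nonempty, so its last cell points to `s x`; since the added cell at `s y`
does not point to `s x`, that pointer lies in the one-cell subheap, hence in `h`.
-/

namespace SL4

abbrev Var := ℕ
abbrev Loc := ℕ

/-- A heap: a partial function on locations with finite domain. -/
structure Heap where
  f : Loc → Option Loc
  fin : {l | f l ≠ none}.Finite

/-- Domain of a heap. -/
def Heap.dom (h : Heap) : Set Loc := {l | h.f l ≠ none}

/-- Range of a heap. -/
def Heap.ran (h : Heap) : Set Loc := {l' | ∃ l, h.f l = some l'}

/-- Disjointness of heaps. -/
def Heap.Disj (h₁ h₂ : Heap) : Prop := ∀ l, h₁.f l = none ∨ h₂.f l = none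

/-- Union of heaps (left-biased; used on disjoint heaps). -/
def Heap.union (h₁ h₂ : Heap) : Heap where
  f := fun l => (h₁.f l).or (h₂.f l)
  fin := by
    apply Set.Finite.subset (h₁.fin.union h₂.fin)
    intro l hl
    simp only [Set.mem_setOf_eq] at hl
    by_cases h1 : h₁.f l = none
    · right
      simp only [Set.mem_setOf_eq]
      intro h2
      exact hl (by simp [h1, h2])
    · left; exact h1

/-- `h.iter n` is the `n`-fold functional composition of the partial function `h`. -/
def Heap.iter (h : Heap) : ℕ → Loc → Option Loc
  | 0, l => some l
  | n + 1, l => (h.iter n l).bind h.f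

/-- Semantics of the precise list-segment predicate `ls(x,y)`. -/
def lsSem (s : Var → Loc) (h : Heap) (x y : Var) : Prop :=
  (h.dom = ∅ ∧ s x = s y) ∨
  ∃ n : ℕ, 1 ≤ n ∧ ∃ ℓ : ℕ → Loc,
    ℓ 0 = s x ∧ ℓ n = s y ∧
    (∀ i ≤ n, ∀ j ≤ n, i ≠ j → ℓ i ≠ ℓ j) ∧
    h.dom = {l | ∃ i < n, ℓ i = l} ∧
    (∀ i < n, h.f (ℓ i) = some (ℓ (i + 1)))

/-- Formulas of `SL(∗, −∗, ls)`. -/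
inductive Form : Type
  | eq (x y : Var)
  | pto (x y : Var)
  | ls (x y : Var)
  | emp
  | top
  | not (φ : Form)
  | and (φ ψ : Form)
  | sep (φ ψ : Form)
  | wand (φ ψ : Form)

/-- Satisfaction relation of `SL(∗, −∗, ls)`. -/
def Sat (s : Var → Loc) (h : Heap) : Form → Prop
  | .eq x y => s x = s y
  | .pto x y => h.f (s x) = some (s y)
  | .ls x y => lsSem s h x y
  | .emp => h.dom = ∅
  | .top => True
  | .not φ => ¬ Sat s h φ
  | .and φ ψ => Sat s h φ ∧ Sat s h ψ
  | .sep φ ψ => ∃ h₁ h₂ : Heap, h₁.Disj h₂ ∧ h₁.union h₂ = h ∧ Sat s h₁ φ ∧ Sat s h₂ ψ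
  | .wand φ ψ => ∀ h₁ : Heap, h₁.Disj h → Sat s h₁ φ → Sat s (h.union h₁) ψ

/-- Falsum `⊥`. -/
def fBot : Form := .not .top

/-- Disjunction. -/
def fOr (φ ψ : Form) : Form := .not (.and (.not φ) (.not ψ))

/-- Implication. -/
def fImp (φ ψ : Form) : Form := fOr (.not φ) ψ

/-- Bi-implication. -/
def fIff (φ ψ : Form) : Form := .and (fImp φ ψ) (fImp ψ φ)

/-- `alloc(x) := (x ↪ x) −∗ ⊥`. -/
def alloc (x : Var) : Form := .wand (.pto x x) fBot

/-- `size ≥ β`. -/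
def sizeGe : ℕ → Form
  | 0 => .top
  | β + 1 => .sep (sizeGe β) (.not .emp)

/-- `size = β`. -/
def sizeEq (β : ℕ) : Form := .and (sizeGe β) (.not (sizeGe (β + 1)))

/-- Septraction `φ −⊛ ψ := ¬(φ −∗ ¬ψ)`. -/
def septr (φ ψ : Form) : Form := .not (.wand φ (.not ψ))

/-- `[φ]_γ := (size = γ ∧ φ) ∗ ⊤`. -/
def boxed (γ : ℕ) (φ : Form) : Form := .sep (.and (sizeEq γ) φ) .top

/-- `reach(x,y) = γ := [ls(x,y)]_γ`. -/
def reachEq (x y : Var) (γ : ℕ) : Form := boxed γ (.ls x y)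

/-- `reach(x,y) ≤ γ := ⋁_{0 ≤ γ' ≤ γ} reach(x,y) = γ'`. -/
def reachLe (x y : Var) : ℕ → Form
  | 0 => reachEq x y 0
  | γ + 1 => fOr (reachLe x y γ) (reachEq x y (γ + 1))

/-- `alloc⁻¹_y(x) := x ↪ x ∨ y ↪ x ∨
    [(alloc(y) ∧ ¬(y ↪ x) ∧ size = 1) −⊛ reach(y,x) = 2]₁`. -/
def allocInv (x y : Var) : Form :=
  fOr (.pto x x) (fOr (.pto y x)
    (boxed 1 (septr (.and (alloc y) (.and (.not (.pto y x)) (sizeEq 1)))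
      (reachEq y x 2))))

namespace Heap

@[ext]
lemma ext {h₁ h₂ : Heap} (hf : h₁.f = h₂.f) : h₁ = h₂ := by
  cases h₁; cases h₂; congr

lemma union_f (h₁ h₂ : Heap) (l : Loc) : (h₁.union h₂).f l = (h₁.f l).or (h₂.f l) := rfl

lemma mem_dom_iff {h : Heap} {l : Loc} : l ∈ h.dom ↔ ∃ v, h.f l = some v :=
  Option.ne_none_iff_exists'

lemma Disj.symm {h₁ h₂ : Heap} (hd : h₁.Disj h₂) : h₂.Disj h₁ :=
  fun l => (hd l).symm

lemma union_comm {h₁ h₂ : Heap} (hd : h₁.Disj h₂) : h₁.union h₂ = h₂.union h₁ := by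
  ext1; funext l
  rcases hd l with hl | hl <;> simp [union_f, hl]

lemma dom_union (h₁ h₂ : Heap) : (h₁.union h₂).dom = h₁.dom ∪ h₂.dom := by
  ext l
  simp only [dom, Set.mem_ofPred_eq, Set.mem_union, union_f]
  cases h₁.f l <;> simp

lemma Disj.disjoint_dom {h₁ h₂ : Heap} (hd : h₁.Disj h₂) : Disjoint h₁.dom h₂.dom :=
  Set.disjoint_left.2 fun l h1 h2 => (hd l).elim h1 h2

lemma ncard_dom_union {h₁ h₂ : Heap} (hd : h₁.Disj h₂) :
    (h₁.union h₂).dom.ncard = h₁.dom.ncard + h₂.dom.ncard := by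
  rw [dom_union, Set.ncard_union_eq hd.disjoint_dom h₁.fin h₂.fin]

lemma ran_subset_union_left (h₁ h₂ : Heap) : h₁.ran ⊆ (h₁.union h₂).ran :=
  fun _ ⟨l, hl⟩ => ⟨l, by simp [union_f, hl]⟩

lemma ran_union_subset (h₁ h₂ : Heap) : (h₁.union h₂).ran ⊆ h₁.ran ∪ h₂.ran := by
  rintro v ⟨l, hl⟩
  cases h1 : h₁.f l with
  | none => exact Or.inr ⟨l, by simpa [union_f, h1] using hl⟩
  | some w => exact Or.inl ⟨l, by simpa [union_f, h1] using hl⟩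

lemma notMem_ran_of_dom_eq_singleton {h : Heap} {l v : Loc} (hd : h.dom = {l})
    (hv : h.f l ≠ some v) : v ∉ h.ran := by
  rintro ⟨m, hm⟩
  have hml : m = l := by
    rw [← Set.mem_singleton_iff, ← hd, mem_dom_iff]
    exact ⟨v, hm⟩
  exact hv (hml ▸ hm)

def empty : Heap := ⟨fun _ => none, by simp⟩

lemma disj_empty (h : Heap) : h.Disj empty := fun _ => Or.inr rfl

lemma union_empty (h : Heap) : h.union empty = h := by
  ext1; funext l
  simp [union_f, empty]

def single (l v : Loc) : Heap :=
  ⟨fun m => if m = l then some v else none,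
    (Set.finite_singleton l).subset fun m hm => by by_contra hml; simp_all⟩

lemma single_f (l v m : Loc) : (single l v).f m = if m = l then some v else none := rfl

@[simp]
lemma dom_single (l v : Loc) : (single l v).dom = {l} := by
  ext m
  by_cases hm : m = l <;> simp [dom, single_f, hm]

lemma disj_single {l l' : Loc} (hl : l ≠ l') (v v' : Loc) : (single l v).Disj (single l' v') := by
  intro m
  by_cases hm : m = l
  · exact Or.inr (by simp [single_f, hm, hl])
  · exact Or.inl (by simp [single_f, hm])

def erase (h : Heap) (l : Loc) : Heap :=
  ⟨fun m => if m = l then none else h.f m,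
    h.fin.subset fun m hm => by by_cases hml : m = l <;> simp_all⟩

lemma erase_f (h : Heap) (l m : Loc) : (h.erase l).f m = if m = l then none else h.f m := rfl

lemma dom_erase (h : Heap) (l : Loc) : (h.erase l).dom = h.dom \ {l} := by
  ext m
  by_cases hml : m = l <;> simp [dom, erase_f, hml]

lemma disj_erase_single (h : Heap) (l v : Loc) : (h.erase l).Disj (single l v) := by
  intro m
  by_cases hml : m = l
  · exact Or.inl (by simp [erase_f, hml])
  · exact Or.inr (by simp [single_f, hml])

lemma erase_union_single {h : Heap} {l v : Loc} (hl : h.f l = some v) :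
    (h.erase l).union (single l v) = h := by
  ext1; funext m
  by_cases hml : m = l
  · simp [union_f, erase_f, single_f, hml, hl]
  · simp [union_f, erase_f, single_f, hml]

end Heap

open Heap

section Semantics

variable {s : Var → Loc} {h : Heap}

lemma sat_fOr {φ ψ : Form} : Sat s h (fOr φ ψ) ↔ Sat s h φ ∨ Sat s h ψ := by
  simp only [fOr, Sat]
  tauto

lemma sat_sizeGe {n : ℕ} : Sat s h (sizeGe n) ↔ n ≤ h.dom.ncard := by
  induction n generalizing h with
  | zero => simp [sizeGe, Sat]
  | succ n ih =>
    simp only [sizeGe, Sat, ← Set.nonempty_iff_ne_empty]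
    constructor
    · rintro ⟨h₁, h₂, hd, rfl, hs₁, hs₂⟩
      have : 0 < h₂.dom.ncard := (Set.ncard_pos h₂.fin).2 hs₂
      rw [ncard_dom_union hd]
      have := ih.1 hs₁
      omega
    · intro hn
      obtain ⟨l, hl⟩ : h.dom.Nonempty := Set.nonempty_of_ncard_ne_zero (by omega)
      obtain ⟨v, hv⟩ := mem_dom_iff.1 hl
      refine ⟨h.erase l, single l v, disj_erase_single h l v, erase_union_single hv, ?_, by simp⟩
      have := Set.ncard_sdiff_singleton_add_one hl h.fin
      rw [ih, dom_erase]
      omega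

lemma sat_sizeEq {n : ℕ} : Sat s h (sizeEq n) ↔ h.dom.ncard = n := by
  simp only [sizeEq, Sat, sat_sizeGe]
  omega

lemma sat_alloc {y : Var} : Sat s h (alloc y) ↔ s y ∈ h.dom := by
  simp only [alloc, fBot, Sat, imp_false, not_true_eq_false]
  constructor
  · intro hw
    by_contra hy
    exact hw (single (s y) (s y)) (fun m => by
      by_cases hm : m = s y
      · exact Or.inr (by simpa [hm, dom] using hy)
      · exact Or.inl (by simp [single_f, hm])) (by simp [single_f])
  · intro hy h₁ hd hp
    rcases hd (s y) with hl | hl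
    · simp [hp] at hl
    · exact hy hl

lemma sat_septr {φ ψ : Form} :
    Sat s h (septr φ ψ) ↔ ∃ h' : Heap, h'.Disj h ∧ Sat s h' φ ∧ Sat s (h.union h') ψ := by
  simp only [septr, Sat, not_forall, not_not, exists_prop]

lemma sat_boxed {γ : ℕ} {φ : Form} :
    Sat s h (boxed γ φ) ↔
      ∃ h₁ h₂ : Heap, h₁.Disj h₂ ∧ h₁.union h₂ = h ∧ h₁.dom.ncard = γ ∧ Sat s h₁ φ := by
  simp only [boxed, Sat, sat_sizeEq, and_true]

end Semantics

section ListSegments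

variable {s : Var → Loc}

lemma mem_ran_of_lsSem {h : Heap} {x y : Var} (hxy : s x ≠ s y) (hls : lsSem s h x y) :
    s y ∈ h.ran := by
  rcases hls with ⟨-, hxy'⟩ | ⟨n, hn, ℓ, -, hℓn, -, -, hstep⟩
  · exact absurd hxy' hxy
  · refine ⟨ℓ (n - 1), ?_⟩
    rw [hstep (n - 1) (by omega), Nat.sub_add_cancel hn, hℓn]

lemma mem_ran_of_sat_reachEq {h : Heap} {x y : Var} {γ : ℕ} (hxy : s x ≠ s y)
    (hr : Sat s h (reachEq x y γ)) : s y ∈ h.ran := by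
  obtain ⟨h₁, h₂, -, rfl, -, hls⟩ := sat_boxed.1 hr
  exact ran_subset_union_left h₁ h₂ (mem_ran_of_lsSem hxy hls)

lemma lsSem_two_step {x y : Var} {l : Loc} (hxl : s x ≠ l) (hly : l ≠ s y) (hxy : s x ≠ s y) :
    lsSem s ((single l (s y)).union (single (s x) l)) x y := by
  have hf : ∀ m, ((single l (s y)).union (single (s x) l)).f m =
      if m = l then some (s y) else if m = s x then some l else none := by
    intro m
    by_cases hm : m = l <;> simp [union_f, single_f, hm]
  refine Or.inr ⟨2, by omega, fun i => if i = 0 then s x else if i = 1 then l else s y,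
    rfl, rfl, ?_, ?_, ?_⟩
  · intro i hi j hj hij
    interval_cases i <;> interval_cases j <;> simp_all [Ne.symm]
  · ext m
    simp only [dom_union, dom_single, Set.mem_union, Set.mem_singleton_iff, Set.mem_ofPred_eq]
    constructor
    · rintro (rfl | rfl)
      exacts [⟨1, by omega, rfl⟩, ⟨0, by omega, rfl⟩]
    · rintro ⟨i, hi, rfl⟩
      interval_cases i <;> simp
  · intro i hi
    interval_cases i <;> simp [hf, hxl]

lemma sat_reachEq_two {x y : Var} {l : Loc} (hxl : s x ≠ l) (hly : l ≠ s y) (hxy : s x ≠ s y) :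
    Sat s ((single l (s y)).union (single (s x) l)) (reachEq x y 2) := by
  refine sat_boxed.2 ⟨_, empty, disj_empty _, union_empty _, ?_, lsSem_two_step hxl hly hxy⟩
  rw [ncard_dom_union (disj_single (Ne.symm hxl) _ _), dom_single, dom_single,
    Set.ncard_singleton, Set.ncard_singleton]

end ListSegments

lemma mem_ran_of_sat_boxed_septr {s : Var → Loc} {h : Heap} {x y : Var} (hxy : s x ≠ s y)
    (hbox : Sat s h
      (boxed 1 (septr (.and (alloc y) (.and (.not (.pto y x)) (sizeEq 1))) (reachEq y x 2)))) :
    s x ∈ h.ran := by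
  obtain ⟨h₁, h₂, -, rfl, -, hsep⟩ := sat_boxed.1 hbox
  obtain ⟨h', -, ⟨hy, hnpto, hsize⟩, hreach⟩ := sat_septr.1 hsep
  obtain ⟨a, ha⟩ := Set.ncard_eq_one.1 (sat_sizeEq.1 hsize)
  have hdom : h'.dom = {s y} := by
    rw [sat_alloc, ha, Set.mem_singleton_iff] at hy
    rw [ha, hy]
  rcases ran_union_subset h₁ h' (mem_ran_of_sat_reachEq (Ne.symm hxy) hreach) with hx | hx
  · exact ran_subset_union_left h₁ h₂ hx
  · exact absurd hx (notMem_ran_of_dom_eq_singleton hdom hnpto)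

lemma sat_boxed_septr_of_f_eq {s : Var → Loc} {h : Heap} {x y : Var} {l : Loc}
    (hxy : s x ≠ s y) (hlx : l ≠ s x) (hly : l ≠ s y) (hl : h.f l = some (s x)) :
    Sat s h
      (boxed 1 (septr (.and (alloc y) (.and (.not (.pto y x)) (sizeEq 1))) (reachEq y x 2))) := by
  have hd := disj_erase_single h l (s x)
  refine sat_boxed.2 ⟨single l (s x), h.erase l, hd.symm, (union_comm hd).symm.trans
    (erase_union_single hl), by simp, sat_septr.2 ⟨single (s y) l, disj_single (Ne.symm hly) _ _,
    ⟨?_, ?_, ?_⟩, sat_reachEq_two (Ne.symm hly) hlx (Ne.symm hxy)⟩⟩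
  · simp [sat_alloc]
  · simp [Sat, single_f, hlx]
  · simp [sat_sizeEq]

/-- For memory states with `s x ≠ s y`, the formula `alloc⁻¹_y(x)` holds
iff `s x` has a predecessor in the heap. -/
theorem allocInv_correct (s : Var → Loc) (h : Heap) (x y : Var)
    (hxy : s x ≠ s y) :
    Sat s h (allocInv x y) ↔ s x ∈ h.ran := by
  rw [allocInv, sat_fOr, sat_fOr]
  constructor
  · rintro (hxx | hyx | hbox)
    · exact ⟨s x, hxx⟩
    · exact ⟨s y, hyx⟩
    · exact mem_ran_of_sat_boxed_septr hxy hbox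
  · rintro ⟨l, hl⟩
    by_cases hlx : l = s x
    · exact Or.inl (show h.f (s x) = some (s x) from hlx ▸ hl)
    by_cases hly : l = s y
    · exact Or.inr (Or.inl (show h.f (s y) = some (s x) from hly ▸ hl))
    exact Or.inr (Or.inr (sat_boxed_septr_of_f_eq hxy hlx hly hl))

end SL4
end
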